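/- There exists a constant C > 0 such that |α'(ξ)| ≤ C·(1+|ξ|)^{-3/2} for all ξ ≠ 0, where α' denotes the derivative of α. -/
import Mathlib

open Real

/-- The Whitham dispersion symbol `α(ξ) = √(tanh ξ / ξ)` for `ξ ≠ 0`, with `α(0) = 1`. -/
noncomputable def whithamSymbol (ξ : ℝ) : ℝ :=
  if ξ = 0 then 1 else Real.sqrt (Real.tanh ξ / ξ)

/-- `sinh x ≤ x * cosh x` for `x ≥ 0`. -/
lemma aux_sinh_le_mul_cosh {x : ℝ} (hx : 0 ≤ x) : Real.sinh x ≤ x * Real.cosh x := by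
  have key : MonotoneOn (fun y : ℝ => y * Real.cosh y - Real.sinh y) (Set.Ici 0) := by
    apply monotoneOn_of_deriv_nonneg (convex_Ici 0)
    · fun_prop
    · apply Differentiable.differentiableOn
      fun_prop
    · intro y hy
      have hd : HasDerivAt (fun y : ℝ => y * Real.cosh y - Real.sinh y)
          (1 * Real.cosh y + y * Real.sinh y - Real.cosh y) y :=
        ((hasDerivAt_id y).mul (Real.hasDerivAt_cosh y)).sub (Real.hasDerivAt_sinh y)
      rw [hd.deriv]
      have hy0 : 0 < y := by simpa [interior_Ici] using hy
      have : 0 ≤ Real.sinh y := Real.sinh_nonneg_iff.2 hy0.le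
      nlinarith
  have := key Set.self_mem_Ici (Set.mem_Ici.2 hx) hx
  simp only [Real.sinh_zero, Real.cosh_zero, mul_one, zero_mul, sub_zero, zero_sub,
    neg_zero] at this
  linarith

lemma aux_tanh_pos {x : ℝ} (hx : 0 < x) : 0 < Real.tanh x := by
  rw [Real.tanh_eq_sinh_div_cosh]
  exact div_pos (by simpa using Real.sinh_pos_iff.2 hx) (Real.cosh_pos x)

lemma aux_sqrt_two_le : Real.sqrt 2 ≤ 2 := by
  nlinarith [Real.sq_sqrt (by norm_num : (0:ℝ) ≤ 2), Real.sqrt_nonneg 2]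

set_option maxHeartbeats 1000000 in
/-- core bound for positive `ξ` -/
lemma whitham_bound_pos {ξ : ℝ} (hξ : 0 < ξ) :
    |deriv whithamSymbol ξ| ≤ 4 * (1 + ξ) ^ (-(3 : ℝ) / 2) := by
  set s := Real.sinh ξ with hs
  set c := Real.cosh ξ with hc
  set t := Real.tanh ξ with ht
  have hc0 : 0 < c := Real.cosh_pos ξ
  have hc1 : 1 ≤ c := Real.one_le_cosh ξ
  have hsξ : ξ ≤ s := Real.self_le_sinh_iff.2 hξ.le
  have hsc : s ≤ ξ * c := aux_sinh_le_mul_cosh hξ.le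
  have hslc : s < c := Real.sinh_lt_cosh ξ
  have hcsq : c ^ 2 - s ^ 2 = 1 := Real.cosh_sq_sub_sinh_sq ξ
  have htsc : t = s / c := Real.tanh_eq_sinh_div_cosh ξ
  have ht0 : 0 < t := aux_tanh_pos hξ
  have hg0 : 0 < t / ξ := div_pos ht0 hξ
  -- the derivative
  have hder : HasDerivAt whithamSymbol
      (((1 / c ^ 2 * ξ - t * 1) / ξ ^ 2) / (2 * Real.sqrt (t / ξ))) ξ := by
    have htanh : HasDerivAt Real.tanh (1 / c ^ 2) ξ := by
      have h1 : HasDerivAt (fun x => Real.sinh x / Real.cosh x)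
          ((c * c - s * s) / c ^ 2) ξ :=
        (Real.hasDerivAt_sinh ξ).div (Real.hasDerivAt_cosh ξ) hc0.ne'
      have h2 : (c * c - s * s) / c ^ 2 = 1 / c ^ 2 := by
        rw [show c * c - s * s = c ^ 2 - s ^ 2 by ring, hcsq]
      rw [← h2]
      exact h1.congr_of_eventuallyEq
        (Filter.Eventually.of_forall fun x => Real.tanh_eq_sinh_div_cosh x)
    have hgd : HasDerivAt (fun x => Real.tanh x / x)
        ((1 / c ^ 2 * ξ - t * 1) / ξ ^ 2) ξ :=
      htanh.div (hasDerivAt_id ξ) hξ.ne'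
    have hsd := hgd.sqrt hg0.ne'
    apply hsd.congr_of_eventuallyEq
    filter_upwards [eventually_ne_nhds hξ.ne'] with x hx
    simp [whithamSymbol, hx]
  rw [hder.deriv]
  set h := t - ξ / c ^ 2 with hh
  have hval : (1 / c ^ 2 * ξ - t * 1) / ξ ^ 2 / (2 * Real.sqrt (t / ξ))
      = -(h / ξ ^ 2 / (2 * Real.sqrt (t / ξ))) := by
    rw [hh]; ring
  have hrq0 : 0 < Real.sqrt (t / ξ) := Real.sqrt_pos.2 hg0
  -- bounds on h
  have hh0 : 0 ≤ h := by
    rw [hh, htsc, div_sub_div _ _ hc0.ne' (by positivity : (c:ℝ)^2 ≠ 0)]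
    apply div_nonneg _ (by positivity)
    nlinarith
  have hh3 : h ≤ ξ ^ 3 := by
    rw [hh, htsc, div_sub_div _ _ hc0.ne' (by positivity : (c:ℝ)^2 ≠ 0),
      div_le_iff₀ (by positivity)]
    have key1 : s * c ^ 2 ≤ ξ * c * c ^ 2 :=
      mul_le_mul_of_nonneg_right hsc (by positivity)
    have key2 : ξ * c * s ^ 2 ≤ ξ * c * (ξ ^ 2 * c ^ 2) := by
      apply mul_le_mul_of_nonneg_left _ (by positivity)
      nlinarith
    nlinarith
  have htle1 : t ≤ 1 := by rw [htsc, div_le_one hc0]; exact hslc.le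
  have hh1 : h ≤ 1 := by
    have : 0 ≤ ξ / c ^ 2 := by positivity
    rw [hh]; linarith
  -- lower bound on t/ξ
  set u := 1 + ξ with hu
  have hu1 : (1:ℝ) ≤ u := by rw [hu]; linarith
  have hu0 : (0:ℝ) < u := lt_of_lt_of_le one_pos hu1
  have hglb : 1 / (2 * u) ≤ t / ξ := by
    rcases le_or_gt ξ 1 with h1 | h1
    · have hcosh1 : c ≤ 2 := by
        have hm : c ≤ Real.cosh 1 := by
          rw [hc, Real.cosh_le_cosh, abs_of_pos hξ, abs_one]; exact h1
        have h2 : Real.cosh 1 ≤ 2 := by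
          rw [Real.cosh_eq]
          have h2 : Real.exp 1 < 2.7182818286 := Real.exp_one_lt_d9
          have h3 : Real.exp (-1) ≤ 1 := by
            rw [Real.exp_le_one_iff]; norm_num
          linarith
        linarith
      have htlb : ξ / 2 ≤ t := by
        rw [htsc, div_le_div_iff₀ two_pos hc0]
        nlinarith
      rw [div_le_div_iff₀ (by positivity) hξ]
      nlinarith
    · have ht12 : 1 / 2 ≤ t := by
        rw [htsc, le_div_iff₀ hc0, hs, hc, Real.sinh_eq, Real.cosh_eq, Real.exp_neg]
        have hE : (2:ℝ) ≤ Real.exp ξ := by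
          have h3 : Real.exp 1 ≤ Real.exp ξ := Real.exp_le_exp.2 h1.le
          have h2 : (2:ℝ) < Real.exp 1 := by
            have := Real.exp_one_gt_d9; linarith
          linarith
        have hE0 : (0:ℝ) < Real.exp ξ := Real.exp_pos ξ
        have hEE : Real.exp ξ * (Real.exp ξ)⁻¹ = 1 := mul_inv_cancel₀ hE0.ne'
        have hEi : (Real.exp ξ)⁻¹ ≤ 1 / 2 := by
          rw [inv_le_comm₀ hE0 (by norm_num)]; linarith
        have hEi0 : (0:ℝ) < (Real.exp ξ)⁻¹ := by positivity
        linarith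
      rw [div_le_div_iff₀ (by positivity) hξ]
      nlinarith [mul_le_mul_of_nonneg_right ht12 (by linarith : (0:ℝ) ≤ 2 * u)]
  -- put things together
  rw [hval, abs_neg,
    abs_of_nonneg (div_nonneg (div_nonneg hh0 (sq_nonneg ξ)) (by positivity))]
  set rq := Real.sqrt (t / ξ) with hrq
  set ru := Real.sqrt u with hruu
  have hru0 : 0 < ru := Real.sqrt_pos.2 hu0
  have hru : ru * ru = u := Real.mul_self_sqrt hu0.le
  have hs20 : (0:ℝ) < Real.sqrt 2 := Real.sqrt_pos.2 (by norm_num)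
  have hs22 : Real.sqrt 2 ≤ 2 := aux_sqrt_two_le
  have hrpow : u ^ (-(3:ℝ)/2) = (u * ru)⁻¹ := by
    rw [hruu, show (-(3:ℝ)/2) = -(3/2) by ring, Real.rpow_neg hu0.le,
      show (3/2:ℝ) = 1 + 1/2 by norm_num, Real.rpow_add hu0, Real.rpow_one,
      ← Real.sqrt_eq_rpow]
  -- lower bound on rq
  have hrq_lb : (Real.sqrt 2 * ru)⁻¹ ≤ rq := by
    have h1 : Real.sqrt (1 / (2 * u)) ≤ rq := Real.sqrt_le_sqrt hglb
    rwa [one_div, Real.sqrt_inv, Real.sqrt_mul (by norm_num : (0:ℝ) ≤ 2), ← hruu] at h1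
  have hrq1 : 1 ≤ rq * (Real.sqrt 2 * ru) := by
    have h2 := mul_le_mul_of_nonneg_right hrq_lb (by positivity : (0:ℝ) ≤ Real.sqrt 2 * ru)
    rwa [inv_mul_cancel₀ (by positivity)] at h2
  -- the key polynomial estimate
  have hhu : h * u ^ 2 ≤ 4 * ξ ^ 2 := by
    rcases le_or_gt ξ 1 with h1 | h1
    · have k1 : h * u ^ 2 ≤ ξ ^ 3 * u ^ 2 :=
        mul_le_mul_of_nonneg_right hh3 (sq_nonneg u)
      rw [hu] at k1 ⊢
      nlinarith [sq_nonneg ξ, sq_nonneg (1-ξ), mul_pos hξ hξ,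
        mul_nonneg (mul_nonneg hξ.le hξ.le) (sub_nonneg.2 h1)]
    · have k1 : h * u ^ 2 ≤ 1 * u ^ 2 :=
        mul_le_mul_of_nonneg_right hh1 (sq_nonneg u)
      rw [hu] at k1 ⊢
      nlinarith
  have hA : h * (u * ru) * (Real.sqrt 2 * ru) ≤ 8 * ξ ^ 2 := by
    have e : h * (u * ru) * (Real.sqrt 2 * ru) = Real.sqrt 2 * (h * (u * (ru * ru))) := by
      ring
    rw [e, hru]
    have e2 : h * (u * u) = h * u ^ 2 := by ring
    rw [e2]
    nlinarith [mul_nonneg hh0 (sq_nonneg u)]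
  have hB : 8 * ξ ^ 2 ≤ 8 * ξ ^ 2 * (rq * (Real.sqrt 2 * ru)) := by
    have := mul_le_mul_of_nonneg_left hrq1 (by positivity : (0:ℝ) ≤ 8 * ξ ^ 2)
    linarith [this]
  have hfin : h * (u * ru) ≤ 4 * (ξ ^ 2 * (2 * rq)) := by
    have hC : h * (u * ru) * (Real.sqrt 2 * ru) ≤ (4 * (ξ ^ 2 * (2 * rq))) * (Real.sqrt 2 * ru) := by
      calc h * (u * ru) * (Real.sqrt 2 * ru) ≤ 8 * ξ ^ 2 := hA
        _ ≤ 8 * ξ ^ 2 * (rq * (Real.sqrt 2 * ru)) := hB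
        _ = (4 * (ξ ^ 2 * (2 * rq))) * (Real.sqrt 2 * ru) := by ring
    exact le_of_mul_le_mul_right hC (by positivity)
  calc h / ξ ^ 2 / (2 * rq) = h / (ξ ^ 2 * (2 * rq)) := by rw [div_div]
    _ ≤ 4 / (u * ru) := by
        rw [div_le_div_iff₀ (by positivity) (by positivity)]
        linarith [hfin]
    _ = 4 * (1 + ξ) ^ (-(3:ℝ)/2) := by rw [hrpow, div_eq_mul_inv]

lemma whitham_even (x : ℝ) : whithamSymbol (-x) = whithamSymbol x := by
  unfold whithamSymbol
  rcases eq_or_ne x 0 with rfl | hx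
  · simp
  · rw [if_neg (neg_ne_zero.2 hx), if_neg hx, Real.tanh_neg, neg_div_neg_eq]

theorem whithamSymbol_deriv_decay :
    ∃ C : ℝ, 0 < C ∧ ∀ ξ : ℝ, ξ ≠ 0 →
      |deriv whithamSymbol ξ| ≤ C * (1 + |ξ|) ^ (-(3 : ℝ) / 2) := by
  refine ⟨4, by norm_num, fun ξ hξ => ?_⟩
  rcases hξ.lt_or_gt with hneg | hpos
  · have hd : deriv whithamSymbol ξ = -deriv whithamSymbol (-ξ) := by
      conv_lhs => rw [show whithamSymbol = (fun x => whithamSymbol (-x)) from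
        funext fun x => (whitham_even x).symm]
      exact deriv_comp_neg whithamSymbol ξ
    rw [hd, abs_neg, abs_of_neg hneg]
    exact whitham_bound_pos (by linarith)
  · rw [abs_of_pos hpos]
    exact whitham_bound_pos hpos
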